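/- Fix i₀ ∈ I and λ₀ ∈ Λ with p := p_{λ₀ i₀} ≠ 𝐨, and set e = δ_{(i₀, p⁻¹, λ₀)} ∈ A, which is an idempotent. The ℂ-linear map φ from the group algebra MonoidAlgebra ℂ G to A determined on basis vectors by φ(δ_g) = δ_{(i₀, g p⁻¹, λ₀)} is an injective multiplicative (algebra) homomorphism whose range equals the corner {e * a * e : a ∈ A}. In particular the corner algebra eAe is isomorphic, as a ℂ-algebra, to the group algebra of G. -/

import Mathlib

/-!
With `p = p_{λ₀ i₀}`, the basis vectors `δ_{(i₀, g p⁻¹, λ₀)}` multiply exactly as the group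
elements do, since `(g p⁻¹) p (h p⁻¹) = g h p⁻¹`; so `φ` is multiplicative with `φ 1 = e`,
which makes `e` idempotent and gives `φ x = e (φ x) e`. Conversely, `e a` is supported in
row `i₀` and `a e` in column `λ₀`, and the vectors supported in row `i₀` and column `λ₀` are
precisely the range of `φ`, because `g ↦ g p⁻¹` is a bijection of `G`.
-/

open scoped Classical

/-- The product of two nonzero elements of the Rees semigroup `S(G; I, Λ; P)`,
taking values in `S = WithZero (I × G × Λ)`: the result is
`(i, g * p_{λ j} * h, μ)` if the sandwich entry `p_{λ j}` is nonzero, and `∅ = 0`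
otherwise. -/
noncomputable def reesMulAux {G I Λ : Type*} [Group G] (P : Λ → I → WithZero G)
    (s t : I × G × Λ) : WithZero (I × G × Λ) :=
  if h : P s.2.2 t.1 = 0 then 0
  else (((s.1, s.2.1 * WithZero.unzero h * t.2.1, t.2.2) : I × G × Λ) :
    WithZero (I × G × Λ))

/-- The Rees multiplication on `S = (I × G × Λ) ∪ {∅} = WithZero (I × G × Λ)`,
where the adjoined zero `∅ = 0` is absorbing. -/
noncomputable def reesMul {G I Λ : Type*} [Group G] (P : Λ → I → WithZero G)
    (x y : WithZero (I × G × Λ)) : WithZero (I × G × Λ) :=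
  if hx : x = 0 then 0
  else if hy : y = 0 then 0
  else reesMulAux P (WithZero.unzero hx) (WithZero.unzero hy)

/-- The product `δ_s * δ_t` of two basis vectors of the contracted semigroup algebra
`A = ℂ₀[S]`: it is `δ_{s·t}` if `s·t ≠ ∅` in `S`, and `0` if `s·t = ∅`. -/
noncomputable def reesDelta {G I Λ : Type*} [Group G] (P : Λ → I → WithZero G)
    (s t : I × G × Λ) : (I × G × Λ) →₀ ℂ :=
  if h : P s.2.2 t.1 = 0 then 0
  else Finsupp.single (s.1, s.2.1 * WithZero.unzero h * t.2.1, t.2.2) (1 : ℂ)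

/-- The multiplication of the contracted semigroup algebra `A = ℂ₀[S]`, as the
(unique) bilinear map determined on basis vectors by `δ_s * δ_t = δ_{s·t}` if
`s·t ≠ ∅` in `S` and `δ_s * δ_t = 0` if `s·t = ∅`. -/
noncomputable def reesAlgMul {G I Λ : Type*} [Group G] (P : Λ → I → WithZero G) :
    ((I × G × Λ) →₀ ℂ) →ₗ[ℂ] ((I × G × Λ) →₀ ℂ) →ₗ[ℂ] ((I × G × Λ) →₀ ℂ) :=
  Finsupp.lift (((I × G × Λ) →₀ ℂ) →ₗ[ℂ] ((I × G × Λ) →₀ ℂ)) ℂ (I × G × Λ)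
    fun s => Finsupp.lift ((I × G × Λ) →₀ ℂ) ℂ (I × G × Λ) fun t => reesDelta P s t

open Finsupp

section ReesAlgebra

variable {G I Λ : Type*} [Group G] (P : Λ → I → WithZero G)

lemma reesAlgMul_apply (x y : (I × G × Λ) →₀ ℂ) :
    reesAlgMul P x y = x.sum fun s c => y.sum fun t d => (c * d) • reesDelta P s t := by
  simp only [reesAlgMul, lift_apply, Finsupp.sum, LinearMap.sum_apply,
    LinearMap.smul_apply, Finset.smul_sum, smul_smul]

lemma reesAlgMul_single_single (s t : I × G × Λ) (c d : ℂ) :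
    reesAlgMul P (single s c) (single t d) = (c * d) • reesDelta P s t := by
  simp [reesAlgMul_apply]

lemma reesAlgMul_single_single_of_ne_zero {s t : I × G × Λ} (h : P s.2.2 t.1 ≠ 0) (c d : ℂ) :
    reesAlgMul P (single s c) (single t d)
      = single (s.1, s.2.1 * WithZero.unzero h * t.2.1, t.2.2) (c * d) := by
  rw [reesAlgMul_single_single, reesDelta, dif_neg h, smul_single, smul_eq_mul, mul_one]

lemma reesDelta_mem_supported (s t : I × G × Λ) :
    reesDelta P s t ∈ supported ℂ ℂ {u | u.1 = s.1 ∧ u.2.2 = t.2.2} := by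
  unfold reesDelta
  split_ifs
  · exact zero_mem _
  · exact single_mem_supported ℂ _ ⟨rfl, rfl⟩

lemma reesAlgMul_mem_supported {R : Set I} {C : Set Λ} {x y : (I × G × Λ) →₀ ℂ}
    (hx : x ∈ supported ℂ ℂ {u | u.1 ∈ R}) (hy : y ∈ supported ℂ ℂ {u | u.2.2 ∈ C}) :
    reesAlgMul P x y ∈ supported ℂ ℂ {u | u.1 ∈ R ∧ u.2.2 ∈ C} := by
  rw [reesAlgMul_apply]
  refine Submodule.finsuppSum_mem _ _ _ _ fun s hs => ?_
  refine Submodule.finsuppSum_mem _ _ _ _ fun t ht => ?_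
  refine Submodule.smul_mem _ _ (supported_mono ?_ (reesDelta_mem_supported P s t))
  rintro u ⟨hu₁, hu₂⟩
  exact ⟨hu₁ ▸ hx (mem_support_iff.2 hs), hu₂ ▸ hy (mem_support_iff.2 ht)⟩

lemma reesAlgMul_reesAlgMul_single_mem_supported (s t : I × G × Λ) (c d : ℂ)
    (a : (I × G × Λ) →₀ ℂ) :
    reesAlgMul P (reesAlgMul P (single s c) a) (single t d)
      ∈ supported ℂ ℂ {u | u.1 = s.1 ∧ u.2.2 = t.2.2} := by
  have hsa := reesAlgMul_mem_supported P (R := {s.1}) (C := Set.univ) (y := a)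
    (single_mem_supported ℂ c rfl) (by simp)
  exact reesAlgMul_mem_supported P (R := {s.1}) (C := {t.2.2})
    (supported_mono (fun u hu => hu.1) hsa) (single_mem_supported ℂ d rfl)

end ReesAlgebra

section Corner

variable {G I Λ : Type*} [Group G] {P : Λ → I → WithZero G} {i₀ : I} {lam₀ : Λ}

def cornerIndex (hp : P lam₀ i₀ ≠ 0) (g : G) : I × G × Λ :=
  (i₀, g * (WithZero.unzero hp)⁻¹, lam₀)

noncomputable def cornerIdempotent (hp : P lam₀ i₀ ≠ 0) : (I × G × Λ) →₀ ℂ :=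
  single (i₀, (WithZero.unzero hp)⁻¹, lam₀) 1

variable (hp : P lam₀ i₀ ≠ 0)

lemma cornerIndex_injective : Function.Injective (cornerIndex hp) := by
  intro g h hgh
  simpa [cornerIndex] using hgh

lemma range_cornerIndex : Set.range (cornerIndex hp) = {u | u.1 = i₀ ∧ u.2.2 = lam₀} := by
  ext ⟨i, g, lam⟩
  refine ⟨?_, ?_⟩
  · rintro ⟨h, hh⟩
    simp_all [cornerIndex]
  · rintro ⟨rfl, rfl⟩
    exact ⟨g * WithZero.unzero hp, by simp [cornerIndex]⟩

lemma range_lmapDomain_cornerIndex :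
    LinearMap.range (lmapDomain ℂ ℂ (cornerIndex hp))
      = supported ℂ ℂ {u | u.1 = i₀ ∧ u.2.2 = lam₀} := by
  rw [LinearMap.range_eq_map, ← supported_univ, lmapDomain_supported, Set.image_univ,
    range_cornerIndex]

lemma reesAlgMul_single_cornerIndex (g h : G) (c d : ℂ) :
    reesAlgMul P (single (cornerIndex hp g) c) (single (cornerIndex hp h) d)
      = single (cornerIndex hp (g * h)) (c * d) := by
  rw [reesAlgMul_single_single_of_ne_zero P hp]
  simp [cornerIndex, mul_assoc]

lemma lmapDomain_cornerIndex_mul (x y : MonoidAlgebra ℂ G) :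
    lmapDomain ℂ ℂ (cornerIndex hp) (x * y).coeff
      = reesAlgMul P (lmapDomain ℂ ℂ (cornerIndex hp) x.coeff)
          (lmapDomain ℂ ℂ (cornerIndex hp) y.coeff) := by
  induction x using MonoidAlgebra.induction_linear with
  | zero => simp
  | add a b ha hb =>
    rw [add_mul, MonoidAlgebra.coeff_add, map_add, ha, hb, MonoidAlgebra.coeff_add, map_add,
      map_add, LinearMap.add_apply]
  | single g c =>
    induction y using MonoidAlgebra.induction_linear with
    | zero => simp
    | add a b ha hb =>
      rw [mul_add, MonoidAlgebra.coeff_add, map_add, ha, hb, MonoidAlgebra.coeff_add, map_add,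
        map_add]
    | single h d =>
      simp only [MonoidAlgebra.single_mul_single, MonoidAlgebra.coeff_single, lmapDomain_apply,
        mapDomain_single, reesAlgMul_single_cornerIndex]

lemma lmapDomain_cornerIndex_one :
    lmapDomain ℂ ℂ (cornerIndex hp) (1 : MonoidAlgebra ℂ G).coeff = cornerIdempotent hp := by
  simp [MonoidAlgebra.one_def, MonoidAlgebra.coeff_single, cornerIndex, cornerIdempotent]

lemma reesAlgMul_cornerIdempotent_self :
    reesAlgMul P (cornerIdempotent hp) (cornerIdempotent hp) = cornerIdempotent hp := by
  rw [← lmapDomain_cornerIndex_one hp, ← lmapDomain_cornerIndex_mul, one_mul]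

lemma range_lmapDomain_cornerIndex_eq_corner :
    Set.range (lmapDomain ℂ ℂ (cornerIndex hp))
      = {z | ∃ a, z = reesAlgMul P (reesAlgMul P (cornerIdempotent hp) a)
          (cornerIdempotent hp)} := by
  ext z
  refine ⟨?_, ?_⟩
  · rintro ⟨x, rfl⟩
    refine ⟨lmapDomain ℂ ℂ (cornerIndex hp) x, ?_⟩
    calc lmapDomain ℂ ℂ (cornerIndex hp) x
        = lmapDomain ℂ ℂ (cornerIndex hp) (1 * MonoidAlgebra.ofCoeff x * 1).coeff := by simp
      _ = _ := by rw [lmapDomain_cornerIndex_mul, lmapDomain_cornerIndex_mul,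
          lmapDomain_cornerIndex_one]
  · rintro ⟨a, rfl⟩
    rw [← LinearMap.coe_range, range_lmapDomain_cornerIndex]
    exact reesAlgMul_reesAlgMul_single_mem_supported P _ _ 1 1 a

end Corner

theorem rees_corner_iso_group_algebra_general
    {G I Λ : Type*} [Group G]
    (P : Λ → I → WithZero G)
    (i₀ : I) (lam₀ : Λ) (hp : P lam₀ i₀ ≠ 0) :
    (reesAlgMul P (Finsupp.single ((i₀, (WithZero.unzero hp)⁻¹, lam₀) : I × G × Λ) (1 : ℂ))
        (Finsupp.single ((i₀, (WithZero.unzero hp)⁻¹, lam₀) : I × G × Λ) (1 : ℂ))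
      = Finsupp.single ((i₀, (WithZero.unzero hp)⁻¹, lam₀) : I × G × Λ) (1 : ℂ)) ∧
    Function.Injective
      (Finsupp.lmapDomain ℂ ℂ (fun g : G => ((i₀, g * (WithZero.unzero hp)⁻¹, lam₀) : I × G × Λ))) ∧
    (∀ x y : MonoidAlgebra ℂ G,
      Finsupp.lmapDomain ℂ ℂ (fun g : G => ((i₀, g * (WithZero.unzero hp)⁻¹, lam₀) : I × G × Λ))
          (x * y).coeff
        = reesAlgMul P
            (Finsupp.lmapDomain ℂ ℂ
              (fun g : G => ((i₀, g * (WithZero.unzero hp)⁻¹, lam₀) : I × G × Λ)) x.coeff)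
            (Finsupp.lmapDomain ℂ ℂ
              (fun g : G => ((i₀, g * (WithZero.unzero hp)⁻¹, lam₀) : I × G × Λ)) y.coeff)) ∧
    (Set.range (Finsupp.lmapDomain ℂ ℂ
        (fun g : G => ((i₀, g * (WithZero.unzero hp)⁻¹, lam₀) : I × G × Λ)))
      = {z : (I × G × Λ) →₀ ℂ | ∃ a : (I × G × Λ) →₀ ℂ,
          z = reesAlgMul P
            (reesAlgMul P
              (Finsupp.single ((i₀, (WithZero.unzero hp)⁻¹, lam₀) : I × G × Λ) (1 : ℂ)) a)
            (Finsupp.single ((i₀, (WithZero.unzero hp)⁻¹, lam₀) : I × G × Λ) (1 : ℂ))}) := by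
  exact ⟨reesAlgMul_cornerIdempotent_self hp, mapDomain_injective (cornerIndex_injective hp),
    lmapDomain_cornerIndex_mul hp, range_lmapDomain_cornerIndex_eq_corner hp⟩

/-- for fixed `i₀ ∈ I`, `λ₀ ∈ Λ` with `p := p_{λ₀ i₀} ≠ 𝐨`, the element
`e = δ_{(i₀, p⁻¹, λ₀)}` of `A = ℂ₀[S]` is idempotent, and the `ℂ`-linear map
`φ : MonoidAlgebra ℂ G → A` determined by `φ(δ_g) = δ_{(i₀, g p⁻¹, λ₀)}` is an
injective multiplicative (algebra) homomorphism whose range is the corner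
`{e * a * e : a ∈ A}`; in particular `eAe` is isomorphic as a `ℂ`-algebra to the
group algebra of `G`. -/
theorem rees_corner_iso_group_algebra
    {G I Λ : Type*} [Group G] [Nonempty I] [Nonempty Λ]
    (P : Λ → I → WithZero G)
    (hrow : ∀ lam : Λ, ∃ i : I, P lam i ≠ 0)
    (hcol : ∀ i : I, ∃ lam : Λ, P lam i ≠ 0)
    (i₀ : I) (lam₀ : Λ) (hp : P lam₀ i₀ ≠ 0) :
    (reesAlgMul P (Finsupp.single ((i₀, (WithZero.unzero hp)⁻¹, lam₀) : I × G × Λ) (1 : ℂ))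
        (Finsupp.single ((i₀, (WithZero.unzero hp)⁻¹, lam₀) : I × G × Λ) (1 : ℂ))
      = Finsupp.single ((i₀, (WithZero.unzero hp)⁻¹, lam₀) : I × G × Λ) (1 : ℂ)) ∧
    Function.Injective
      (Finsupp.lmapDomain ℂ ℂ (fun g : G => ((i₀, g * (WithZero.unzero hp)⁻¹, lam₀) : I × G × Λ))) ∧
    (∀ x y : MonoidAlgebra ℂ G,
      Finsupp.lmapDomain ℂ ℂ (fun g : G => ((i₀, g * (WithZero.unzero hp)⁻¹, lam₀) : I × G × Λ))
          (x * y).coeff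
        = reesAlgMul P
            (Finsupp.lmapDomain ℂ ℂ
              (fun g : G => ((i₀, g * (WithZero.unzero hp)⁻¹, lam₀) : I × G × Λ)) x.coeff)
            (Finsupp.lmapDomain ℂ ℂ
              (fun g : G => ((i₀, g * (WithZero.unzero hp)⁻¹, lam₀) : I × G × Λ)) y.coeff)) ∧
    (Set.range (Finsupp.lmapDomain ℂ ℂ
        (fun g : G => ((i₀, g * (WithZero.unzero hp)⁻¹, lam₀) : I × G × Λ)))
      = {z : (I × G × Λ) →₀ ℂ | ∃ a : (I × G × Λ) →₀ ℂ,
          z = reesAlgMul P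
            (reesAlgMul P
              (Finsupp.single ((i₀, (WithZero.unzero hp)⁻¹, lam₀) : I × G × Λ) (1 : ℂ)) a)
            (Finsupp.single ((i₀, (WithZero.unzero hp)⁻¹, lam₀) : I × G × Λ) (1 : ℂ))}) :=
  rees_corner_iso_group_algebra_general P i₀ lam₀ hp
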